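/- arXiv:2507.23675 — 2 statements merged into one kernel-verified Lean document; each statement's English description precedes it below -/
import Mathlib

section
/- Let p* be a probability distribution on ℝ^d with finite second moment, and let a₀, a₁ be independent random variables with a₁ ~ p* and a₀ ~ N(μ, σ²I). Define v(x,0) = E[a₁ - a₀ | a₀ = x] and let p₁ be the law of â₁ = a₀ + v(a₀, 0). If the law of a₀ + v(a₀,0) obtained by exactly solving the ODE da_t/dt = v(a_t,t) (with v the conditional expectation velocity of the straight interpolation a_t = t a₁ + (1-t)a₀) at time 1 equals p*, then the squared 2-Wasserstein distance between p* and p₁ is bounded by the variance of a₁: W₂(p*, p₁)² ≤ Var(a₁). -/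
open MeasureTheory ProbabilityTheory

noncomputable section

/-- Squared 2-Wasserstein distance: infimum over couplings of the expected squared distance. -/
def W2sq {d : ℕ} (μ ν : Measure (EuclideanSpace ℝ (Fin d))) : ℝ :=
  sInf { x : ℝ | ∃ γ : Measure (EuclideanSpace ℝ (Fin d) × EuclideanSpace ℝ (Fin d)),
    IsProbabilityMeasure γ ∧ γ.map Prod.fst = μ ∧ γ.map Prod.snd = ν ∧
    x = ∫ p, ‖p.1 - p.2‖ ^ 2 ∂γ }

theorem stmt0 {d : ℕ} {Ω : Type*} [MeasurableSpace Ω] (P : Measure Ω) [IsProbabilityMeasure P]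
    (a₀ a₁ : Ω → EuclideanSpace ℝ (Fin d)) (ha₀ : Measurable a₀) (ha₁ : Measurable a₁)
    (hindep : IndepFun a₀ a₁ P)
    (h2 : MemLp a₁ 2 P) (h2' : MemLp a₀ 2 P)
    -- a₁ ~ p*
    (pstar : Measure (EuclideanSpace ℝ (Fin d))) (hps : P.map a₁ = pstar)
    -- a₀ ~ N(μ₀, σ² I)
    (μ₀ : ℝ) (σ : NNReal)
    (hgauss : P.map (fun ω i => a₀ ω i) = Measure.pi fun _ : Fin d => gaussianReal μ₀ (σ ^ 2))
    -- v(x, 0) = E[a₁ - a₀ | a₀ = x]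
    (v : EuclideanSpace ℝ (Fin d) → EuclideanSpace ℝ (Fin d))
    (hv : (fun ω => v (a₀ ω)) =ᵐ[P]
      P[fun ω => a₁ ω - a₀ ω | MeasurableSpace.comap a₀ inferInstance])
    -- the full straight-interpolation velocity field, agreeing with v at time 0
    (V : EuclideanSpace ℝ (Fin d) → ℝ → EuclideanSpace ℝ (Fin d))
    (hV : ∀ t ∈ Set.Icc (0:ℝ) 1,
      (fun ω => V (t • a₁ ω + (1 - t) • a₀ ω) t) =ᵐ[P]
        P[fun ω => a₁ ω - a₀ ω |
          MeasurableSpace.comap (fun ω => t • a₁ ω + (1 - t) • a₀ ω) inferInstance])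
    (hV0 : ∀ x, V x 0 = v x)
    -- exactly solving the ODE da_t/dt = V(a_t, t) from a₀ yields law p* at time 1
    (F : ℝ → EuclideanSpace ℝ (Fin d) → EuclideanSpace ℝ (Fin d))
    (hF0 : ∀ x, F 0 x = x)
    (hFode : ∀ x, ∀ t ∈ Set.Icc (0:ℝ) 1, HasDerivAt (fun s => F s x) (V (F t x) t) t)
    (hFtransport : P.map (fun ω => F 1 (a₀ ω)) = pstar)
    -- p₁ is the law of the one-step Euler sample â₁ = a₀ + v(a₀, 0)
    (p₁ : Measure (EuclideanSpace ℝ (Fin d)))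
    (hp₁ : P.map (fun ω => a₀ ω + v (a₀ ω)) = p₁) :
    W2sq pstar p₁ ≤ ∫ ω, ‖a₁ ω - ∫ ω', a₁ ω' ∂P‖ ^ 2 ∂P := by
  classical
  have hle : MeasurableSpace.comap a₀ inferInstance ≤ (by infer_instance : MeasurableSpace Ω) :=
    ha₀.comap_le
  have hle₁ : MeasurableSpace.comap a₁ inferInstance ≤ (by infer_instance : MeasurableSpace Ω) :=
    ha₁.comap_le
  have hint1 : Integrable a₁ P := h2.integrable one_le_two
  have hint0 : Integrable a₀ P := h2'.integrable one_le_two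
  set m : EuclideanSpace ℝ (Fin d) := ∫ ω, a₁ ω ∂P with hm
  have cond0 : P[a₀ | MeasurableSpace.comap a₀ inferInstance] = a₀ :=
    condExp_of_stronglyMeasurable (μ := P) hle
      ((@measurable_iff_comap_le Ω _ _ _ a₀).mpr le_rfl).stronglyMeasurable hint0
  have cond1 : P[a₁ | MeasurableSpace.comap a₀ inferInstance] =ᵐ[P] fun _ => m :=
    condExp_indep_eq hle₁ hle
      ((@measurable_iff_comap_le Ω _ _ _ a₁).mpr le_rfl).stronglyMeasurable hindep.symm
  have condsub : P[fun ω => a₁ ω - a₀ ω | MeasurableSpace.comap a₀ inferInstance]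
      =ᵐ[P] fun ω => m - a₀ ω := by
    have h : P[a₁ - a₀ | MeasurableSpace.comap a₀ inferInstance] =ᵐ[P]
        P[a₁ | MeasurableSpace.comap a₀ inferInstance]
          - P[a₀ | MeasurableSpace.comap a₀ inferInstance] :=
      condExp_sub hint1 hint0 _
    have h' : P[fun ω => a₁ ω - a₀ ω | MeasurableSpace.comap a₀ inferInstance]
        = P[a₁ - a₀ | MeasurableSpace.comap a₀ inferInstance] := rfl
    rw [h']
    filter_upwards [h, cond1] with ω h1 h2
    rw [h1, Pi.sub_apply, h2, cond0]
  have key : (fun ω => a₀ ω + v (a₀ ω)) =ᵐ[P] fun _ => m := by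
    filter_upwards [hv, condsub] with ω h1 h2
    simp only [h1, h2]
    abel
  have hp₁' : p₁ = Measure.dirac m := by
    rw [← hp₁, Measure.map_congr key, Measure.map_const]
    simp
  have hpstar : IsProbabilityMeasure pstar := by
    rw [← hps]; exact Measure.isProbabilityMeasure_map ha₁.aemeasurable
  have e1 : ∫ p : EuclideanSpace ℝ (Fin d) × EuclideanSpace ℝ (Fin d),
      ‖p.1 - p.2‖ ^ 2 ∂(pstar.prod (Measure.dirac m)) = ∫ x, ‖x - m‖ ^ 2 ∂pstar := by
    rw [Measure.prod_dirac]
    exact integral_map (measurable_id.prodMk measurable_const).aemeasurable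
      ((continuous_fst.sub continuous_snd).norm.pow 2).aestronglyMeasurable
  have e2 : ∫ x, ‖x - m‖ ^ 2 ∂pstar = ∫ ω, ‖a₁ ω - m‖ ^ 2 ∂P := by
    rw [← hps]
    exact integral_map ha₁.aemeasurable
      ((continuous_id.sub continuous_const).norm.pow 2).aestronglyMeasurable
  have hmem : (∫ ω, ‖a₁ ω - m‖ ^ 2 ∂P) ∈
      { x : ℝ | ∃ γ : Measure (EuclideanSpace ℝ (Fin d) × EuclideanSpace ℝ (Fin d)),
        IsProbabilityMeasure γ ∧ γ.map Prod.fst = pstar ∧ γ.map Prod.snd = p₁ ∧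
        x = ∫ p, ‖p.1 - p.2‖ ^ 2 ∂γ } := by
    refine ⟨pstar.prod (Measure.dirac m), inferInstance, ?_, ?_, ?_⟩
    · rw [Measure.map_fst_prod]; simp
    · rw [Measure.map_snd_prod, hp₁']; simp
    · rw [e1, e2]
  have hbdd : BddBelow { x : ℝ |
      ∃ γ : Measure (EuclideanSpace ℝ (Fin d) × EuclideanSpace ℝ (Fin d)),
      IsProbabilityMeasure γ ∧ γ.map Prod.fst = pstar ∧ γ.map Prod.snd = p₁ ∧
      x = ∫ p, ‖p.1 - p.2‖ ^ 2 ∂γ } := by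
    refine ⟨0, ?_⟩
    rintro x ⟨γ, _, _, _, rfl⟩
    exact integral_nonneg fun p => by positivity
  exact csInf_le hbdd hmem
end
end

section
/- Let T be the MeanFlow operator (T u)(x,r,t) = v(x,t) − (t−r)(v(x,t)·∂_x u(x,r,t) + ∂_t u(x,r,t)) acting on continuously differentiable functions u. Then the true average velocity u*(x,r,t) = (1/(t−r))∫_r^t v(x_τ,τ)dτ (along trajectories of dx/dτ = v) is a fixed point: T u* = u*. -/
open MeasureTheory intervalIntegral

noncomputable section

/-- The MeanFlow operator: (T u)(y, r, t) = v(y,t) − (t−r)(∂ₓu(y,r,t)[v(y,t)] + ∂ₜu(y,r,t)). -/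
def meanFlowOp {d : ℕ} (v : EuclideanSpace ℝ (Fin d) → ℝ → EuclideanSpace ℝ (Fin d))
    (u : EuclideanSpace ℝ (Fin d) → ℝ → ℝ → EuclideanSpace ℝ (Fin d)) :
    EuclideanSpace ℝ (Fin d) → ℝ → ℝ → EuclideanSpace ℝ (Fin d) :=
  fun y r t => v y t - (t - r) •
    ((fderiv ℝ (fun z => u z r t) y) (v y t) + deriv (fun s => u y r s) t)

/-- The true average velocity u*(x_t, r, t) = (t−r)⁻¹ ∫_r^t v(x_τ,τ)dτ along trajectories of
dx/dτ = v is a fixed point of the MeanFlow operator: (T u*)(x_t, r, t) = u*(x_t, r, t). -/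
theorem stmt12 {d : ℕ} (v : EuclideanSpace ℝ (Fin d) → ℝ → EuclideanSpace ℝ (Fin d))
    (x : ℝ → EuclideanSpace ℝ (Fin d)) (r t : ℝ)
    (hx : ∀ s : ℝ, HasDerivAt x (v (x s) s) s)
    (hv : Continuous fun τ : ℝ => v (x τ) τ)
    (ustar : EuclideanSpace ℝ (Fin d) → ℝ → ℝ → EuclideanSpace ℝ (Fin d))
    (hu : ∀ s : ℝ, (s - r) • ustar (x s) r s = ∫ τ in r..s, v (x τ) τ)
    (hdiff : DifferentiableAt ℝ
      (fun p : EuclideanSpace ℝ (Fin d) × ℝ => ustar p.1 r p.2) (x t, t)) :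
    meanFlowOp v ustar (x t) r t = ustar (x t) r t := by
  set h : EuclideanSpace ℝ (Fin d) × ℝ → EuclideanSpace ℝ (Fin d) :=
    fun p => ustar p.1 r p.2 with hh
  set D := fderiv ℝ h (x t, t) with hD
  have hDf : HasFDerivAt h D (x t, t) := hdiff.hasFDerivAt
  -- derivative of s ↦ ustar (x s) r s
  have hpair : HasDerivAt (fun s => (x s, s)) (v (x t) t, 1) t :=
    (hx t).prodMk (hasDerivAt_id t)
  have hU : HasDerivAt (fun s => ustar (x s) r s) (D (v (x t) t, 1)) t := by
    have := HasFDerivAt.comp_hasDerivAt (f := fun s => (x s, s)) t hDf hpair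
    exact this
  -- derivative of g(s) = (s - r) • ustar (x s) r s
  have hg : HasDerivAt (fun s => (s - r) • ustar (x s) r s)
      (ustar (x t) r t + (t - r) • D (v (x t) t, 1)) t := by
    have : HasDerivAt (fun s => (s - r) • ustar (x s) r s)
        ((t - r) • D (v (x t) t, 1) + (1:ℝ) • ustar (x t) r t) t :=
      ((hasDerivAt_id t).sub_const r).smul hU
    rw [one_smul, add_comm] at this; exact this
  -- derivative of the integral
  have hI : HasDerivAt (fun s => ∫ τ in r..s, v (x τ) τ) (v (x t) t) t :=
    intervalIntegral.integral_hasDerivAt_right (hv.intervalIntegrable r t)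
      (hv.stronglyMeasurableAtFilter _ _) hv.continuousAt
  have hgI : HasDerivAt (fun s => (s - r) • ustar (x s) r s) (v (x t) t) t := by
    have : (fun s => (s - r) • ustar (x s) r s) = fun s => ∫ τ in r..s, v (x τ) τ :=
      funext hu
    rw [this]; exact hI
  have key : ustar (x t) r t + (t - r) • D (v (x t) t, 1) = v (x t) t :=
    hg.unique hgI
  -- partial derivatives
  have hfx : HasFDerivAt (fun z => ustar z r t)
      (D.comp (ContinuousLinearMap.inl ℝ _ ℝ)) (x t) :=
    HasFDerivAt.comp (g := h) (x t) hDf (hasFDerivAt_prodMk_left (𝕜 := ℝ) (x t) t)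
  have hft : HasDerivAt (fun s => ustar (x t) r s) (D (0, 1)) t :=
    hDf.comp_hasDerivAt t ((hasDerivAt_const t (x t)).prodMk (hasDerivAt_id t))
  have e1 : (fderiv ℝ (fun z => ustar z r t) (x t)) (v (x t) t) = D (v (x t) t, 0) := by
    rw [hfx.fderiv]; rfl
  have e2 : deriv (fun s => ustar (x t) r s) t = D (0, 1) := hft.deriv
  have e3 : D (v (x t) t, 0) + D (0, 1) = D (v (x t) t, 1) := by
    rw [← D.map_add]; norm_num
  rw [meanFlowOp, e1, e2, e3]
  exact (eq_sub_of_add_eq key).symm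
end
end
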